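/- arXiv:2602.07710 — 2 statements merged into one kernel-verified Lean document; each statement's English description precedes it below -/
import Mathlib

section
/- Let X be a finite-dimensional normed real vector space with the metric induced by its norm, and let H be a hypothesis class on X satisfying the r-UUS property for some r > 0. Then for any ε, ε', δ, δ' > 0, H is (ε, ε')-uniformly generatable if and only if it is (δ, δ')-uniformly generatable, and H is (ε, ε')-non-uniformly generatable if and only if it is (δ, δ')-non-uniformly generatable. -/
/-!
Start from a generator `G` at scales `(ε, ε')` and move to scales `(δ, δ')`.
Since every closed `ε`-ball is covered by `N` closed `δ`-balls, an `ε`-cover of a sample by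
fewer than `d` balls yields a `δ`-cover by fewer than `N * d + 1` balls, so the threshold `d` at
scale `ε` becomes the threshold `N * d + 1` at scale `δ`.
For the novelty radius, feed `G` its own outputs: they stay in the support and are pairwise
`ε'`-separated, while in a proper space the `δ'`-neighbourhood of a finite sample is totally
bounded, so some output escapes that neighbourhood. The new generator returns the first one
that does.
-/

open Set

namespace Gen

variable {X : Type*}

/-- The support of a hypothesis `h : X → Bool`: its set of positive examples. -/
def supp (h : X → Bool) : Set X := {x | h x = true}

/-- Closed ball of radius `ε` around `c`, with respect to an explicit distance `ρ`. -/
def ball (ρ : X → X → ℝ) (c : X) (ε : ℝ) : Set X := {y | ρ c y ≤ ε}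

/-- Closed `ε`-neighborhood of a set `A`: points whose infimal distance to `A` is `≤ ε`. -/
def setBall (ρ : X → X → ℝ) (A : Set X) (ε : ℝ) : Set X :=
  {y | sInf ((fun a => ρ a y) '' A) ≤ ε}

/-- The `ε`-covering number of `A` with respect to `ρ`, valued in `ℕ∞`
(`⊤` if no finite cover exists). -/
noncomputable def covN (ρ : X → X → ℝ) (ε : ℝ) (A : Set X) : ℕ∞ :=
  sInf {n : ℕ∞ | ∃ S : Finset X, (S.card : ℕ∞) = n ∧ A ⊆ ⋃ θ ∈ S, ball ρ θ ε}

/-- `H` satisfies the `r`-Uniformly Unbounded Support property w.r.t. `ρ`. -/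
def UUS (ρ : X → X → ℝ) (H : Set (X → Bool)) (r : ℝ) : Prop :=
  ∀ h ∈ H, covN ρ r (supp h) = ⊤

/-- The list of the first `s` terms `x 0, …, x (s-1)` of a sequence. -/
def prefList (x : ℕ → X) (s : ℕ) : List X := List.ofFn (fun i : Fin s => x i)

/-- The set of the first `s` terms of a sequence. -/
def prefSet (x : ℕ → X) (s : ℕ) : Set X := x '' Iio s

/-- `(ε, ε')`-uniform generatability. -/
def UnifGen (ρ : X → X → ℝ) (ε ε' : ℝ) (H : Set (X → Bool)) : Prop :=
  ∃ G : List X → X, ∃ d : ℕ, ∀ h ∈ H, ∀ x : ℕ → X, (∀ i, x i ∈ supp h) →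
    ∀ t : ℕ, (d : ℕ∞) ≤ covN ρ ε (prefSet x t) →
      ∀ s ≥ t, G (prefList x s) ∈ supp h \ setBall ρ (prefSet x s) ε'

/-- `(ε, ε')`-non-uniform generatability. -/
def NonUnifGen (ρ : X → X → ℝ) (ε ε' : ℝ) (H : Set (X → Bool)) : Prop :=
  ∃ G : List X → X, ∀ h ∈ H, ∃ d : ℕ, ∀ x : ℕ → X, (∀ i, x i ∈ supp h) →
    ∀ t : ℕ, (d : ℕ∞) ≤ covN ρ ε (prefSet x t) →
      ∀ s ≥ t, G (prefList x s) ∈ supp h \ setBall ρ (prefSet x s) ε'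

/-- `(ε, ε')`-generatability in the limit. -/
def GenInLimit (ρ : X → X → ℝ) (ε ε' : ℝ) (H : Set (X → Bool)) : Prop :=
  ∃ G : List X → X, ∀ h ∈ H, ∀ x : ℕ → X, (∀ i, x i ∈ supp h) →
    supp h ⊆ setBall ρ (range x) ε →
      ∃ t : ℕ, ∀ s ≥ t, G (prefList x s) ∈ supp h \ setBall ρ (prefSet x s) ε'

/-- The closure `⟨x_1,…,x_t⟩_H` of a finite sample: intersection of the supports of all
hypotheses in the version space. -/
def clos (H : Set (X → Bool)) (l : List X) : Set X :=
  ⋂ h ∈ {h | h ∈ H ∧ ∀ y ∈ l, y ∈ supp h}, supp h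

/-- The `(ε, ε')`-closure dimension of `H`, valued in `ℕ∞`. -/
noncomputable def closureDim (ρ : X → X → ℝ) (ε ε' : ℝ) (H : Set (X → Bool)) : ℕ∞ :=
  sSup (insert 0 {d : ℕ∞ | ∃ h ∈ H, ∃ l : List X, (∀ y ∈ l, y ∈ supp h) ∧
    covN ρ ε {y | y ∈ l} = d ∧ covN ρ ε' (clos H l) ≠ ⊤})

/-- `ρ` is a metric on `X`. -/
def IsMetricDist (ρ : X → X → ℝ) : Prop :=
  (∀ x y, ρ x y = 0 ↔ x = y) ∧ (∀ x y, ρ x y = ρ y x) ∧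
    ∀ x y z, ρ x z ≤ ρ x y + ρ y z

/-- `(X, ρ)` is doubling: every closed ball of radius `r` can be covered by at most `M`
closed balls of radius `r / 2`. -/
def Doubling (ρ : X → X → ℝ) : Prop :=
  ∃ M : ℕ, ∀ (x : X) (r : ℝ), 0 < r →
    ∃ S : Finset X, S.card ≤ M ∧ ball ρ x r ⊆ ⋃ θ ∈ S, ball ρ θ (r / 2)

section Covering

variable {ρ : X → X → ℝ} {η : ℝ} {A : Set X}

lemma covN_le_card {S : Finset X} (h : A ⊆ ⋃ θ ∈ S, ball ρ θ η) : covN ρ η A ≤ S.card :=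
  sInf_le ⟨S, rfl, h⟩

lemma nonempty_of_one_le_covN (h : 1 ≤ covN ρ η A) : A.Nonempty := by
  by_contra hA
  have : covN ρ η A ≤ 0 := covN_le_card (S := ∅) (by simp [not_nonempty_iff_eq_empty.mp hA])
  exact absurd (h.trans this) (by simp)

end Covering

section PseudoMetric

variable [PseudoMetricSpace X]

lemma ball_dist (c : X) (η : ℝ) : ball dist c η = Metric.closedBall c η := by
  ext y
  simp [ball, dist_comm]

lemma lt_dist_of_notMem_setBall {A : Set X} {a y : X} {η : ℝ}
    (hy : y ∉ setBall dist A η) (ha : a ∈ A) : η < dist a y := by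
  by_contra! hle
  have hbdd : BddBelow ((dist · y) '' A) := ⟨0, by rintro _ ⟨_, -, rfl⟩; exact dist_nonneg⟩
  exact hy ((csInf_le hbdd (mem_image_of_mem _ ha)).trans hle)

-- `A` must be nonempty: `setBall dist ∅ η` is everything, as `sInf ∅ = 0`.
lemma setBall_subset_biUnion_closedBall {A : Set X} (hA : A.Finite) (hne : A.Nonempty)
    (η : ℝ) : setBall dist A η ⊆ ⋃ a ∈ A, Metric.closedBall a η := by
  intro y hy
  obtain ⟨a, ha, hay⟩ := (hne.image (dist · y)).csInf_mem (hA.image _)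
  exact mem_biUnion ha (by rw [Metric.mem_closedBall, dist_comm]; exact hay.le.trans hy)

lemma isBounded_setBall {A : Set X} (hA : A.Finite) (hne : A.Nonempty) (η : ℝ) :
    Bornology.IsBounded (setBall dist A η) :=
  ((Bornology.isBounded_biUnion hA).2 fun _ _ => Metric.isBounded_closedBall).subset
    (setBall_subset_biUnion_closedBall hA hne η)

lemma exists_notMem_of_separated {s : Set X} (hs : TotallyBounded s) {ε : ℝ}
    (hε : 0 < ε) {y : ℕ → X} (hy : ∀ j k, j < k → ε < dist (y j) (y k)) : ∃ k, y k ∉ s := by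
  by_contra! hys
  obtain ⟨t, ht, hst⟩ := Metric.totallyBounded_iff.mp hs (ε / 2) (half_pos hε)
  have hcenter : ∀ k, ∃ c : t, dist (y k) c < ε / 2 := fun k => by
    obtain ⟨c, hc, hyc⟩ := mem_iUnion₂.mp (hst (hys k))
    exact ⟨⟨c, hc⟩, hyc⟩
  choose c hc using hcenter
  have := ht.to_subtype
  obtain ⟨j, k, hjk, hcjk⟩ := Finite.exists_ne_map_eq_of_infinite c
  have hclose : ∀ j k, c j = c k → dist (y j) (y k) < ε := fun j k hcjk =>
    calc dist (y j) (y k) ≤ dist (y j) (c j) + dist (y k) (c k) := by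
          rw [hcjk]; exact dist_triangle_right _ _ _
      _ < ε / 2 + ε / 2 := add_lt_add (hc j) (hc k)
      _ = ε := add_halves ε
  rcases hjk.lt_or_gt with hlt | hgt
  · exact (hy j k hlt).not_gt (hclose j k hcjk)
  · exact (hy k j hgt).not_gt (hclose k j hcjk.symm)

end PseudoMetric

section Normed

open scoped Pointwise

variable [SeminormedAddCommGroup X]

lemma subset_biUnion_closedBall_add [DecidableEq X] {A : Set X} {S S₀ : Finset X} {a b : ℝ}
    (hS : A ⊆ ⋃ θ ∈ S, Metric.closedBall θ a)
    (hS₀ : Metric.closedBall (0 : X) a ⊆ ⋃ σ ∈ S₀, Metric.closedBall σ b) :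
    A ⊆ ⋃ c ∈ S + S₀, Metric.closedBall c b := by
  intro y hy
  obtain ⟨θ, hθ, hyθ⟩ := mem_iUnion₂.mp (hS hy)
  obtain ⟨σ, hσ, hyσ⟩ := mem_iUnion₂.mp
    (hS₀ (mem_closedBall_zero_iff.mpr (by rwa [← dist_eq_norm])))
  refine mem_iUnion₂.mpr ⟨θ + σ, Finset.add_mem_add hθ hσ, ?_⟩
  rwa [Metric.mem_closedBall, dist_eq_norm, sub_add_eq_sub_sub, ← dist_eq_norm]

lemma le_covN_of_mul_add_one_le_covN {ε δ : ℝ} {S₀ : Finset X}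
    (hS₀ : Metric.closedBall (0 : X) ε ⊆ ⋃ σ ∈ S₀, Metric.closedBall σ δ)
    {A : Set X} {d : ℕ} (h : ((S₀.card * d + 1 : ℕ) : ℕ∞) ≤ covN dist δ A) :
    (d : ℕ∞) ≤ covN dist ε A := by
  classical
  by_contra! hlt
  obtain ⟨_, ⟨S, rfl, hS⟩, hSd⟩ := sInf_lt_iff.mp hlt
  simp only [ball_dist] at hS
  have hcov : covN dist δ A ≤ (S + S₀).card :=
    covN_le_card (by simpa only [ball_dist] using subset_biUnion_closedBall_add hS hS₀)
  have hcard : (S + S₀).card < S₀.card * d + 1 :=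
    calc (S + S₀).card ≤ S.card * S₀.card := Finset.card_add_le
      _ ≤ S₀.card * d := by rw [mul_comm]; gcongr; exact_mod_cast hSd.le
      _ < S₀.card * d + 1 := Nat.lt_succ_self _
  exact absurd (h.trans hcov) (by exact_mod_cast hcard.not_ge)

end Normed

lemma exists_finset_closedBall_subset_biUnion {X : Type*} [PseudoMetricSpace X] [ProperSpace X]
    (c : X) (a : ℝ) {b : ℝ} (hb : 0 < b) :
    ∃ S : Finset X, Metric.closedBall c a ⊆ ⋃ σ ∈ S, Metric.closedBall σ b := by
  obtain ⟨t, -, ht, hcov⟩ := finite_cover_balls_of_compact (isCompact_closedBall c a) hb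
  refine ⟨ht.toFinset, hcov.trans fun y hy => ?_⟩
  obtain ⟨σ, hσ, hyσ⟩ := mem_iUnion₂.mp hy
  exact mem_iUnion₂.mpr ⟨σ, ht.mem_toFinset.mpr hσ, Metric.ball_subset_closedBall hyσ⟩

section Prefix

variable (x : ℕ → X)

lemma prefList_succ (n : ℕ) : prefList x (n + 1) = prefList x n ++ [x n] := by
  rw [prefList, prefList, List.ofFn_succ', List.concat_eq_append]
  rfl

lemma setOf_mem_prefList (n : ℕ) : {y | y ∈ prefList x n} = prefSet x n := by
  ext y
  simp [prefList, prefSet, List.mem_ofFn, Fin.exists_iff]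

lemma finite_prefSet (n : ℕ) : (prefSet x n).Finite := (finite_Iio n).image x

lemma prefSet_mono : Monotone (prefSet x) := fun _ _ hmn => image_mono (Iio_subset_Iio hmn)

variable {x} {y : ℕ → X} {n : ℕ}

lemma prefList_congr (h : ∀ i < n, x i = y i) : prefList x n = prefList y n :=
  congrArg List.ofFn (funext fun i => h i i.2)

lemma prefSet_congr (h : ∀ i < n, x i = y i) : prefSet x n = prefSet y n :=
  image_congr h

end Prefix

def Generates (ρ : X → X → ℝ) (ε ε' : ℝ) (d : ℕ) (G : List X → X) (h : X → Bool) : Prop :=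
  ∀ x : ℕ → X, (∀ i, x i ∈ supp h) → ∀ t : ℕ, (d : ℕ∞) ≤ covN ρ ε (prefSet x t) →
    ∀ s ≥ t, G (prefList x s) ∈ supp h \ setBall ρ (prefSet x s) ε'

-- Only the first `n` terms matter, so the sequence may be padded by any point of the support.
lemma Generates.of_prefix {ρ : X → X → ℝ} {ε ε' : ℝ} {d : ℕ} {G : List X → X} {h : X → Bool}
    (hG : Generates ρ ε ε' d G h) {z : ℕ → X} {t n : ℕ} (hz : ∀ i < n, z i ∈ supp h)
    (hh : (supp h).Nonempty) (ht : (d : ℕ∞) ≤ covN ρ ε (prefSet z t)) (htn : t ≤ n) :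
    G (prefList z n) ∈ supp h \ setBall ρ (prefSet z n) ε' := by
  classical
  obtain ⟨p, hp⟩ := hh
  set w : ℕ → X := fun i => if i < n then z i else p
  have hwz : ∀ i < n, w i = z i := fun i hi => if_pos hi
  have hw : ∀ i, w i ∈ supp h := fun i => by
    by_cases hi : i < n
    · rw [hwz i hi]; exact hz i hi
    · simp only [w, if_neg hi, hp]
  have hwt : prefSet w t = prefSet z t := prefSet_congr fun i hi => hwz i (hi.trans_le htn)
  simpa only [prefList_congr hwz, prefSet_congr hwz] using hG w hw t (hwt ▸ ht) n htn

def feed (G : List X → X) (l : List X) : List X := l ++ [G l]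

/-- The sequence that starts with `x 0, …, x (s-1)` and continues with the outputs of `G`
on its own prefixes. -/
def selfFeed (G : List X → X) (x : ℕ → X) (s : ℕ) (i : ℕ) : X :=
  if i < s then x i else G ((feed G)^[i - s] (prefList x s))

section SelfFeed

variable {G : List X → X} {x : ℕ → X} {s : ℕ}

lemma selfFeed_of_lt {i : ℕ} (hi : i < s) : selfFeed G x s i = x i := if_pos hi

lemma selfFeed_add (k : ℕ) :
    selfFeed G x s (s + k) = G ((feed G)^[k] (prefList x s)) := by
  simp [selfFeed]

lemma prefList_selfFeed (k : ℕ) :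
    prefList (selfFeed G x s) (s + k) = (feed G)^[k] (prefList x s) := by
  induction k with
  | zero => exact prefList_congr fun i hi => selfFeed_of_lt hi
  | succ k ih =>
    rw [← add_assoc, prefList_succ, ih, selfFeed_add, Function.iterate_succ_apply']
    rfl

lemma selfFeed_eq_of_le {n : ℕ} (hn : s ≤ n) :
    selfFeed G x s n = G (prefList (selfFeed G x s) n) := by
  obtain ⟨k, rfl⟩ := Nat.exists_eq_add_of_le hn
  rw [selfFeed_add, prefList_selfFeed]

lemma Generates.selfFeed_mem {ρ : X → X → ℝ} {ε ε' : ℝ} {d : ℕ} {h : X → Bool}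
    (hG : Generates ρ ε ε' d G h) (hx : ∀ i, x i ∈ supp h) {t : ℕ}
    (ht : (d : ℕ∞) ≤ covN ρ ε (prefSet x t)) (hts : t ≤ s) {n : ℕ} (hn : s ≤ n) :
    selfFeed G x s n ∈ supp h \ setBall ρ (prefSet (selfFeed G x s) n) ε' := by
  induction n using Nat.strong_induction_on with
  | _ n ih =>
    have hz : ∀ i < n, selfFeed G x s i ∈ supp h := fun i hi => by
      by_cases his : i < s
      · rw [selfFeed_of_lt his]; exact hx i
      · exact (ih i hi (not_lt.mp his)).1
    have hzt : prefSet (selfFeed G x s) t = prefSet x t :=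
      prefSet_congr fun i hi => selfFeed_of_lt (hi.trans_le hts)
    rw [selfFeed_eq_of_le hn]
    exact hG.of_prefix hz ⟨x 0, hx 0⟩ (hzt ▸ ht) (hts.trans hn)

end SelfFeed

open Classical in
noncomputable def escapeGen (ρ : X → X → ℝ) (δ' : ℝ) (G : List X → X) (l : List X) : X :=
  if hk : ∃ k, G ((feed G)^[k] l) ∉ setBall ρ {y | y ∈ l} δ' then G ((feed G)^[Nat.find hk] l)
  else G l

section Rescale

variable [SeminormedAddCommGroup X] [ProperSpace X] {H : Set (X → Bool)} {ε ε' δ δ' : ℝ}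

lemma Generates.rescale {S₀ : Finset X} (hε' : 0 < ε')
    (hS₀ : Metric.closedBall (0 : X) ε ⊆ ⋃ σ ∈ S₀, Metric.closedBall σ δ)
    {d : ℕ} {G : List X → X} {h : X → Bool} (hG : Generates dist ε ε' d G h) :
    Generates dist δ δ' (S₀.card * d + 1) (escapeGen dist δ' G) h := by
  classical
  intro x hx t ht s hs
  have hεt := le_covN_of_mul_add_one_le_covN hS₀ ht
  have hne : (prefSet x s).Nonempty :=
    (nonempty_of_one_le_covN (le_trans (by exact_mod_cast Nat.succ_pos _) ht)).mono
      (prefSet_mono x hs)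
  have hnew : ∀ k, selfFeed G x s (s + k) ∈
      supp h \ setBall dist (prefSet (selfFeed G x s) (s + k)) ε' :=
    fun k => hG.selfFeed_mem hx hεt hs (Nat.le_add_right s k)
  have hsep : ∀ j k, j < k → ε' < dist (selfFeed G x s (s + j)) (selfFeed G x s (s + k)) :=
    fun j k hjk => lt_dist_of_notMem_setBall (hnew k).2 ⟨s + j, by simpa using hjk, rfl⟩
  have hesc : ∃ k, G ((feed G)^[k] (prefList x s)) ∉ setBall dist {y | y ∈ prefList x s} δ' := by
    simp_rw [setOf_mem_prefList, ← selfFeed_add]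
    have hbdd := isBounded_setBall (finite_prefSet x s) hne δ'
    exact exists_notMem_of_separated
      (hbdd.isCompact_closure.totallyBounded.subset subset_closure) hε' hsep
  have hout := hnew (Nat.find hesc)
  rw [selfFeed_add] at hout
  rw [escapeGen, dif_pos hesc]
  exact ⟨hout.1, setOf_mem_prefList x s ▸ Nat.find_spec hesc⟩

lemma unifGen_rescale (hε' : 0 < ε') (hδ : 0 < δ) (hgen : UnifGen dist ε ε' H) :
    UnifGen dist δ δ' H := by
  obtain ⟨G, d, hG⟩ := hgen
  obtain ⟨S₀, hS₀⟩ := exists_finset_closedBall_subset_biUnion (0 : X) ε hδ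
  exact ⟨escapeGen dist δ' G, S₀.card * d + 1, fun h hh => Generates.rescale hε' hS₀ (hG h hh)⟩

lemma nonUnifGen_rescale (hε' : 0 < ε') (hδ : 0 < δ) (hgen : NonUnifGen dist ε ε' H) :
    NonUnifGen dist δ δ' H := by
  obtain ⟨G, hG⟩ := hgen
  obtain ⟨S₀, hS₀⟩ := exists_finset_closedBall_subset_biUnion (0 : X) ε hδ
  refine ⟨escapeGen dist δ' G, fun h hh => ?_⟩
  obtain ⟨d, hd⟩ := hG h hh
  exact ⟨S₀.card * d + 1, Generates.rescale hε' hS₀ hd⟩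

end Rescale

theorem gen_scale_invariant_of_finiteDimensional_general {X : Type*}
    [NormedAddCommGroup X] [NormedSpace ℝ X] [FiniteDimensional ℝ X]
    (H : Set (X → Bool))
    (ε ε' δ δ' : ℝ) (hε : 0 < ε) (hε' : 0 < ε') (hδ : 0 < δ) (hδ' : 0 < δ') :
    (UnifGen dist ε ε' H ↔ UnifGen dist δ δ' H) ∧
      (NonUnifGen dist ε ε' H ↔ NonUnifGen dist δ δ' H) :=
  ⟨⟨unifGen_rescale hε' hδ, unifGen_rescale hδ' hε⟩,
    ⟨nonUnifGen_rescale hε' hδ, nonUnifGen_rescale hδ' hε⟩⟩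

/-- in a finite-dimensional normed real vector space, uniform and
non-uniform generatability are invariant to the choice of novelty scales. -/
theorem gen_scale_invariant_of_finiteDimensional {X : Type*}
    [NormedAddCommGroup X] [NormedSpace ℝ X] [FiniteDimensional ℝ X]
    (H : Set (X → Bool)) (r : ℝ) (hr : 0 < r) (hUUS : UUS dist H r)
    (ε ε' δ δ' : ℝ) (hε : 0 < ε) (hε' : 0 < ε') (hδ : 0 < δ) (hδ' : 0 < δ') :
    (UnifGen dist ε ε' H ↔ UnifGen dist δ δ' H) ∧
      (NonUnifGen dist ε ε' H ↔ NonUnifGen dist δ δ' H) :=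
  gen_scale_invariant_of_finiteDimensional_general H ε ε' δ δ' hε hε' hδ hδ'

end Gen
end

section
/- In the metric space ℝ with the metric ρ(x, y) = |x − y|, there exists a hypothesis class H satisfying the r-UUS property for every r > 0 such that H is (ε, 1)-generatable in the limit for every ε ∈ (0, 1), but H is not (1, 1)-generatable in the limit. -/
open Set

namespace Gen

variable {X : Type*}

/-!
The supports of the class are sets of positive integers that contain a pair `a, a + 1` and are
closed under `a ↦ 4 * a` on such pairs. At a scale `ε < 1` a sequence that `ε`-covers a support
enumerates it, so once a pair `a, a + 1` has been seen, a large `4 ^ k * a` is a correct guess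
beyond the sample.

At scale `1` a single point covers a pair, and an adversary exploits this against any generator
`G`: on level `b k = 3 * 2 ^ k` it shows `b k + 1` if `G` has already guessed `b k`, and `b k`
otherwise. Adding to the shown points all pairs on the even levels, or all pairs on the odd
levels, gives two supports in the class whose common points are the shown ones, so eventually `G`
may only guess points that are shown later. A later shown `b k` was not guessed by time `k`, and a
later shown `b k + 1` means that `b k` was guessed by time `k`, necessarily before `G` settled;
such early guesses hit only finitely many levels.
-/

open Filter Function

section SetBall

variable {ρ : X → X → ℝ} {A : Set X} {ε : ℝ} {y : X}

theorem mem_setBall_of_le (hρ : ∀ a b, 0 ≤ ρ a b) {a : X} (ha : a ∈ A) (h : ρ a y ≤ ε) :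
    y ∈ setBall ρ A ε := by
  have hbdd : BddBelow ((ρ · y) '' A) := ⟨0, by rintro _ ⟨b, -, rfl⟩; exact hρ b y⟩
  exact (csInf_le hbdd ⟨a, ha, rfl⟩).trans h

theorem notMem_setBall_of_lt (hA : A.Finite) (hne : A.Nonempty) (h : ∀ a ∈ A, ε < ρ a y) :
    y ∉ setBall ρ A ε := by
  obtain ⟨a, ha, hmin⟩ := (hne.image (ρ · y)).csInf_mem (hA.image _)
  exact fun hy => (h a ha).not_ge (hmin.trans_le hy)

theorem subset_range_of_subset_setBall {δ : ℝ} {x : ℕ → X}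
    (hsep : ∀ a ∈ A, ∀ b ∈ A, ρ a b < δ → a = b) (hx : ∀ i, x i ∈ A) (hε : ε < δ)
    (hA : A ⊆ setBall ρ (range x) ε) : A ⊆ range x := by
  intro y hy
  obtain ⟨_, ⟨_, ⟨i, rfl⟩, rfl⟩, hi⟩ :=
    exists_lt_of_csInf_lt ((range_nonempty x).image _) ((hA hy).trans_lt hε)
  exact ⟨i, hsep _ (hx i) _ hy hi⟩

theorem le_of_apply_notMem_setBall (hρ : ∀ a b, 0 ≤ ρ a b) (hρ₀ : ∀ a, ρ a a = 0) (hε : 0 ≤ ε)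
    {x : ℕ → X} {s n : ℕ} (h : x n ∉ setBall ρ (prefSet x s) ε) : s ≤ n := by
  by_contra! hn
  exact h (mem_setBall_of_le hρ ⟨n, hn, rfl⟩ ((hρ₀ _).trans_le hε))

end SetBall

theorem mem_prefList {x : ℕ → X} {s : ℕ} {y : X} : y ∈ prefList x s ↔ y ∈ prefSet x s := by
  simp [prefList, prefSet, List.mem_ofFn, Fin.exists_iff]

theorem covN_eq_top_of_not_bddAbove {A : Set ℝ} (hA : ¬ BddAbove A) (r : ℝ) :
    covN (fun x y : ℝ => |x - y|) r A = ⊤ := by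
  refine sInf_eq_top.mpr ?_
  rintro n ⟨S, -, hS⟩
  refine (hA ?_).elim
  obtain ⟨M, hM⟩ := S.bddAbove
  refine ⟨M + r, fun y hy => ?_⟩
  obtain ⟨θ, hθ, hθy⟩ := mem_iUnion₂.mp (hS hy)
  have hθM : θ ≤ M := hM hθ
  have : y - θ ≤ |θ - y| := abs_sub_comm θ y ▸ le_abs_self _
  linarith [show |θ - y| ≤ r from hθy]

open Classical in
-- The `Fin` indices make the recursion well founded; `advSeq_eq` is the readable form.
noncomputable def advSeq (G : List X → X) (b c : ℕ → X) (k : ℕ) : X :=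
  if ∃ s : Fin (k + 1), G (List.ofFn fun i : Fin s => advSeq G b c i) = b k then c k else b k
termination_by k
decreasing_by all_goals exact (Fin.is_lt _).trans_le (Nat.lt_succ_iff.mp (Fin.is_lt _))

section Adversary

variable (G : List X → X) (b c : ℕ → X)

open Classical in
theorem advSeq_eq (k : ℕ) :
    advSeq G b c k = if ∃ s ≤ k, G (prefList (advSeq G b c) s) = b k then c k else b k := by
  rw [advSeq]
  congr 1
  exact propext ⟨fun ⟨s, hs⟩ => ⟨s, Nat.lt_succ_iff.mp s.2, hs⟩,
    fun ⟨s, hs, h⟩ => ⟨⟨s, Nat.lt_succ_iff.mpr hs⟩, h⟩⟩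

theorem advSeq_eq_or (k : ℕ) : advSeq G b c k = b k ∨ advSeq G b c k = c k := by
  rw [advSeq_eq]
  split_ifs <;> simp

variable {G b c}

theorem advSeq_of_guess_eq {k s : ℕ} (hs : s ≤ k) (h : G (prefList (advSeq G b c) s) = b k) :
    advSeq G b c k = c k := by
  rw [advSeq_eq, if_pos ⟨s, hs, h⟩]

theorem exists_guess_eq_of_advSeq_ne {k : ℕ} (h : advSeq G b c k ≠ b k) :
    ∃ s ≤ k, G (prefList (advSeq G b c) s) = b k := by
  by_contra hn
  rw [advSeq_eq, if_neg hn] at h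
  exact h rfl

theorem not_eventually_guess_eq_advSeq_later (hb : Injective b) (hbc : ∀ m n, b m ≠ c n) :
    ¬ ∀ᶠ s in atTop, ∃ n ≥ s, G (prefList (advSeq G b c) s) = advSeq G b c n := by
  set x := advSeq G b c
  intro h
  obtain ⟨t, ht⟩ := eventually_atTop.mp h
  have level_guessed_early : ∀ s ≥ t, ∃ n ≥ s, b n ∈ (fun s => G (prefList x s)) '' Iio t := by
    intro s hs
    obtain ⟨n, hsn, hn⟩ := ht s hs
    have hxn : x n ≠ b n := fun hxn =>
      hbc n n (hxn.symm.trans (advSeq_of_guess_eq hsn (hn.trans hxn)))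
    obtain ⟨s', -, hs'⟩ := exists_guess_eq_of_advSeq_ne hxn
    refine ⟨n, hsn, s', mem_Iio.mpr (lt_of_not_ge fun hts' => ?_), hs'⟩
    obtain ⟨n', -, hn'⟩ := ht s' hts'
    rcases advSeq_eq_or G b c n' with hx | hx
    · obtain rfl := hb (hx.symm.trans (hn'.symm.trans hs'))
      exact hxn hx
    · exact hbc n n' (hs'.symm.trans (hn'.trans hx))
  obtain ⟨N, hN⟩ := (((finite_Iio t).image _).preimage hb.injOn).bddAbove
  obtain ⟨n, hn, hmem⟩ := level_guessed_early (max t (N + 1)) (le_max_left _ _)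
  have : n ≤ N := hN hmem
  omega

end Adversary

def IsPairIn (S : Set ℝ) (a : ℝ) : Prop := a ∈ S ∧ a + 1 ∈ S

structure IsPairSupport (S : Set ℝ) : Prop where
  subset_natCast : S ⊆ (Nat.cast '' Ici 1 : Set ℝ)
  exists_isPairIn : ∃ a, IsPairIn S a
  isPairIn_four_mul : ∀ a, IsPairIn S a → IsPairIn S (4 * a)

def pairClass : Set (ℝ → Bool) := {h | IsPairSupport (supp h)}

namespace IsPairSupport

variable {S : Set ℝ}

theorem one_le (hS : IsPairSupport S) {y : ℝ} (hy : y ∈ S) : 1 ≤ y := by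
  obtain ⟨n, hn, rfl⟩ := hS.subset_natCast hy
  exact_mod_cast hn

theorem eq_of_abs_sub_lt_one (hS : IsPairSupport S) {a b : ℝ} (ha : a ∈ S) (hb : b ∈ S)
    (hab : |a - b| < 1) : a = b := by
  obtain ⟨m, -, rfl⟩ := hS.subset_natCast ha
  obtain ⟨n, -, rfl⟩ := hS.subset_natCast hb
  by_contra hmn
  exact (Nat.pairwise_one_le_dist fun h => hmn (congrArg _ h)).not_gt hab

theorem isPairIn_four_pow_mul (hS : IsPairSupport S) {a : ℝ} (ha : IsPairIn S a) (k : ℕ) :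
    IsPairIn S (4 ^ k * a) := by
  induction k with
  | zero => simpa using ha
  | succ k ih => simpa [pow_succ', mul_assoc] using hS.isPairIn_four_mul _ ih

theorem not_bddAbove (hS : IsPairSupport S) : ¬ BddAbove S := by
  rintro ⟨M, hM⟩
  obtain ⟨a, ha⟩ := hS.exists_isPairIn
  obtain ⟨k, hk⟩ := pow_unbounded_of_one_lt M (by norm_num : (1 : ℝ) < 4)
  have h4k : (4 : ℝ) ^ k ≤ 4 ^ k * a := le_mul_of_one_le_right (by positivity) (hS.one_le ha.1)
  linarith [hM (hS.isPairIn_four_pow_mul ha k).1]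

end IsPairSupport

def IsSafeGuess (l : List ℝ) (v : ℝ) : Prop :=
  ∃ a, IsPairIn {y | y ∈ l} a ∧ ∃ k : ℕ, v = 4 ^ k * a ∧ ∀ y ∈ l, y + 1 < v

theorem exists_isSafeGuess {l : List ℝ} {a : ℝ} (ha : IsPairIn {y | y ∈ l} a) (ha₁ : 1 ≤ a) :
    ∃ v, IsSafeGuess l v := by
  obtain ⟨M, hM⟩ := l.finite_toSet.bddAbove
  obtain ⟨k, hk⟩ := pow_unbounded_of_one_lt (M + 1) (by norm_num : (1 : ℝ) < 4)
  have h4k : (4 : ℝ) ^ k ≤ 4 ^ k * a := le_mul_of_one_le_right (by positivity) ha₁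
  exact ⟨4 ^ k * a, a, ha, k, rfl, fun y hy => by linarith [hM hy]⟩

theorem IsPairSupport.subset_range_of_subset_setBall {S : Set ℝ} (hS : IsPairSupport S)
    {x : ℕ → ℝ} (hx : ∀ i, x i ∈ S) {ε : ℝ} (hε : ε < 1)
    (hcov : S ⊆ setBall (fun x y : ℝ => |x - y|) (range x) ε) : S ⊆ range x :=
  Gen.subset_range_of_subset_setBall (fun _ ha _ hb => hS.eq_of_abs_sub_lt_one ha hb) hx hε hcov

theorem pairClass_genInLimit {ε : ℝ} (hε : ε < 1) :
    GenInLimit (fun x y : ℝ => |x - y|) ε 1 pairClass := by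
  refine ⟨fun l => Classical.epsilon (IsSafeGuess l), fun h hh x hx hcov => ?_⟩
  have hS : IsPairSupport (supp h) := hh
  obtain ⟨a, ha⟩ := hS.exists_isPairIn
  obtain ⟨i, rfl⟩ := hS.subset_range_of_subset_setBall hx hε hcov ha.1
  obtain ⟨j, hj⟩ := hS.subset_range_of_subset_setBall hx hε hcov ha.2
  refine ⟨max i j + 1, fun s hs => ?_⟩
  have hpair : IsPairIn {y | y ∈ prefList x s} (x i) :=
    ⟨mem_prefList.mpr ⟨i, by grind, rfl⟩, mem_prefList.mpr ⟨j, by grind, hj⟩⟩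
  obtain ⟨a', ha', k, hv, hfar⟩ :=
    Classical.epsilon_spec (exists_isSafeGuess hpair (hS.one_le ha.1))
  have hprefix : ∀ y ∈ prefList x s, y ∈ supp h := fun y hy => by
    obtain ⟨n, -, rfl⟩ := mem_prefList.mp hy
    exact hx n
  refine ⟨?_, notMem_setBall_of_lt ((finite_Iio s).image x) ⟨x 0, 0, by grind, rfl⟩ fun y hy => ?_⟩
  · beta_reduce
    rw [hv]
    exact (hS.isPairIn_four_pow_mul ⟨hprefix _ ha'.1, hprefix _ ha'.2⟩ k).1
  · exact lt_abs.mpr (Or.inr (by linarith [hfar y (mem_prefList.mpr hy)]))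

/-- Levels are more than `2` apart, and `4 * level k = level (k + 2)` keeps the parity of `k`. -/
def level (k : ℕ) : ℝ := 3 * 2 ^ k

def IsLevelPt (k : ℕ) (y : ℝ) : Prop := y = level k ∨ y = level k + 1

theorem four_mul_level (k : ℕ) : 4 * level k = level (k + 2) := by
  simp only [level, pow_add]
  ring

theorem level_add_three_le {k k' : ℕ} (h : k < k') : level k + 3 ≤ level k' := by
  have hk : (1 : ℝ) ≤ 2 ^ k := one_le_pow₀ (by norm_num)
  have hkk' : (2 : ℝ) ^ (k + 1) ≤ 2 ^ k' := pow_le_pow_right₀ (by norm_num) h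
  simp only [level, pow_succ] at hkk' ⊢
  linarith

theorem eq_of_level_lt_level_add_three {k k' : ℕ} (h : level k < level k' + 3)
    (h' : level k' < level k + 3) : k = k' := by
  rcases lt_trichotomy k k' with hk | hk | hk
  · linarith [level_add_three_le hk]
  · exact hk
  · linarith [level_add_three_le hk]

theorem level_injective : Injective level := fun k k' h =>
  eq_of_level_lt_level_add_three (by linarith) (by linarith)

theorem level_ne_level_add_one (k k' : ℕ) : level k ≠ level k' + 1 := fun h => by
  obtain rfl : k = k' := eq_of_level_lt_level_add_three (by linarith) (by linarith)
  linarith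

namespace IsLevelPt

theorem unique {k k' : ℕ} {y : ℝ} (h : IsLevelPt k y) (h' : IsLevelPt k' y) : k = k' := by
  rcases h with rfl | rfl <;> rcases h' with h' | h' <;>
    exact eq_of_level_lt_level_add_three (by linarith) (by linarith)

theorem eq_level_of_add_one {k k' : ℕ} {a : ℝ} (h : IsLevelPt k a) (h' : IsLevelPt k' (a + 1)) :
    k' = k ∧ a = level k := by
  have hk : k' = k := by
    rcases h with rfl | rfl <;> rcases h' with h' | h' <;>
      exact eq_of_level_lt_level_add_three (by linarith) (by linarith)
  subst hk
  rcases h with rfl | rfl <;> rcases h' with h' | h' <;> first | exact ⟨rfl, rfl⟩ | linarith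

theorem abs_sub_le_one {k : ℕ} {y y' : ℝ} (h : IsLevelPt k y) (h' : IsLevelPt k y') :
    |y - y'| ≤ 1 := by
  rcases h with rfl | rfl <;> rcases h' with rfl | rfl <;> norm_num

theorem mem_natCast {k : ℕ} {y : ℝ} (h : IsLevelPt k y) : y ∈ (Nat.cast '' Ici 1 : Set ℝ) := by
  have hk : 1 ≤ 2 ^ k := Nat.one_le_two_pow
  rcases h with rfl | rfl
  · exact ⟨3 * 2 ^ k, by simp only [mem_Ici]; omega, by simp [level]⟩
  · exact ⟨3 * 2 ^ k + 1, by simp only [mem_Ici]; omega, by simp [level]⟩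

end IsLevelPt

def chain (p : ℕ) : Set ℝ := {y | ∃ m, IsLevelPt (2 * m + p) y}

noncomputable def levelAdv (G : List ℝ → ℝ) : ℕ → ℝ := advSeq G level (level · + 1)

def advSupp (G : List ℝ → ℝ) (p : ℕ) : Set ℝ := chain p ∪ range (levelAdv G)

section LevelAdversary

variable (G : List ℝ → ℝ)

theorem isLevelPt_levelAdv (k : ℕ) : IsLevelPt k (levelAdv G k) :=
  advSeq_eq_or G _ _ k

theorem exists_isLevelPt_of_mem_advSupp {p : ℕ} {y : ℝ} (hy : y ∈ advSupp G p) :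
    ∃ k, IsLevelPt k y := by
  rcases hy with ⟨m, hm⟩ | ⟨k, rfl⟩
  exacts [⟨_, hm⟩, ⟨k, isLevelPt_levelAdv G k⟩]

theorem exists_eq_level_of_isPairIn_advSupp {p : ℕ} {a : ℝ} (ha : IsPairIn (advSupp G p) a) :
    ∃ m, a = level (2 * m + p) := by
  obtain ⟨k, hk⟩ := exists_isLevelPt_of_mem_advSupp G ha.1
  obtain ⟨k', hk'⟩ := exists_isLevelPt_of_mem_advSupp G ha.2
  obtain ⟨rfl, rfl⟩ := hk.eq_level_of_add_one hk'
  rcases ha with ⟨⟨m, hm⟩ | ⟨n, hn⟩, ⟨m', hm'⟩ | ⟨n', hn'⟩⟩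
  · exact ⟨m, by rw [hm.unique hk]⟩
  · exact ⟨m, by rw [hm.unique hk]⟩
  · exact ⟨m', by rw [hm'.unique hk']⟩
  · obtain rfl := (isLevelPt_levelAdv G n).unique (hn ▸ hk)
    obtain rfl := (isLevelPt_levelAdv G n').unique (hn' ▸ hk')
    linarith

theorem isPairIn_advSupp_level (p m : ℕ) : IsPairIn (advSupp G p) (level (2 * m + p)) :=
  ⟨Or.inl ⟨m, Or.inl rfl⟩, Or.inl ⟨m, Or.inr rfl⟩⟩

theorem isPairSupport_advSupp (p : ℕ) : IsPairSupport (advSupp G p) where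
  subset_natCast _ hy := (exists_isLevelPt_of_mem_advSupp G hy).choose_spec.mem_natCast
  exists_isPairIn := ⟨_, isPairIn_advSupp_level G p 0⟩
  isPairIn_four_mul a ha := by
    obtain ⟨m, rfl⟩ := exists_eq_level_of_isPairIn_advSupp G ha
    rw [four_mul_level, show 2 * m + p + 2 = 2 * (m + 1) + p by ring]
    exact isPairIn_advSupp_level G p (m + 1)

theorem advSupp_subset_setBall (p : ℕ) :
    advSupp G p ⊆ setBall (fun x y : ℝ => |x - y|) (range (levelAdv G)) 1 := by
  rintro y (⟨m, hm⟩ | ⟨k, rfl⟩)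
  · exact mem_setBall_of_le (fun _ _ => abs_nonneg _) ⟨_, rfl⟩
      ((isLevelPt_levelAdv G _).abs_sub_le_one hm)
  · exact mem_setBall_of_le (fun _ _ => abs_nonneg _) ⟨k, rfl⟩ (by simp)

theorem advSupp_zero_inter_one_subset : advSupp G 0 ∩ advSupp G 1 ⊆ range (levelAdv G) := by
  rintro y ⟨⟨m, hm⟩ | hy, ⟨m', hm'⟩ | hy'⟩
  · have := hm.unique hm'
    omega
  all_goals assumption

end LevelAdversary

theorem pairClass_not_genInLimit_one : ¬ GenInLimit (fun x y : ℝ => |x - y|) 1 1 pairClass := by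
  rintro ⟨G, hG⟩
  have eventually_good (p : ℕ) : ∀ᶠ s in atTop, G (prefList (levelAdv G) s) ∈
      advSupp G p \ setBall (fun x y : ℝ => |x - y|) (prefSet (levelAdv G) s) 1 := by
    obtain ⟨h, hh⟩ : ∃ h : ℝ → Bool, supp h = advSupp G p :=
      ⟨fun y => by classical exact decide (y ∈ advSupp G p), by ext; simp [supp]⟩
    obtain ⟨t, ht⟩ := hG h (show IsPairSupport (supp h) from hh ▸ isPairSupport_advSupp G p)
      (levelAdv G) (fun i => hh ▸ Or.inr ⟨i, rfl⟩) (hh ▸ advSupp_subset_setBall G p)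
    exact eventually_atTop.mpr ⟨t, fun s hs => hh ▸ ht s hs⟩
  refine not_eventually_guess_eq_advSeq_later (G := G) level_injective level_ne_level_add_one ?_
  filter_upwards [eventually_good 0, eventually_good 1] with s hs₀ hs₁
  obtain ⟨n, hn⟩ := advSupp_zero_inter_one_subset G ⟨hs₀.1, hs₁.1⟩
  have hfar : levelAdv G n ∉ setBall (fun x y : ℝ => |x - y|) (prefSet (levelAdv G) s) 1 :=
    hn ▸ hs₀.2
  exact ⟨n, le_of_apply_notMem_setBall (fun _ _ => abs_nonneg _) (by simp) zero_le_one hfar,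
    hn.symm⟩

/-- in `ℝ`, generatability in the limit can fail abruptly at a threshold
scale: some UUS class is `(ε,1)`-generatable in the limit for all `ε ∈ (0,1)` but not
`(1,1)`-generatable in the limit. -/
theorem exists_threshold_genInLimit_real :
    ∃ H : Set (ℝ → Bool),
      (∀ r : ℝ, 0 < r → UUS (fun x y : ℝ => |x - y|) H r) ∧
      (∀ ε : ℝ, 0 < ε → ε < 1 → GenInLimit (fun x y : ℝ => |x - y|) ε 1 H) ∧
      ¬ GenInLimit (fun x y : ℝ => |x - y|) 1 1 H :=
  ⟨pairClass, fun r _ _ hh => covN_eq_top_of_not_bddAbove (IsPairSupport.not_bddAbove hh) r,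
    fun _ _ hε => pairClass_genInLimit hε, pairClass_not_genInLimit_one⟩

end Gen
end
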